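/- arXiv:1707.06724 — 3 statements merged into one kernel-verified Lean document; each statement's English description precedes it below -/
import Mathlib

section
/- For all real numbers γ > 0, γ⁰ > 0, t > 0, t⁰ > 0, the inequality ln(1+γ)/t ≥ A − B·(1/γ) − C·t holds, where A = 2·ln(1+γ⁰)/t⁰ + γ⁰/(t⁰·(γ⁰+1)), B = (γ⁰)²/(t⁰·(γ⁰+1)), and C = ln(1+γ⁰)/(t⁰)². -/
/-!
In the variables `u = 1/γ` and `t`, the rate `log (1 + 1/u) / t` is jointly convex, and the
right-hand side is its tangent plane at `(1/γ₀, t₀)`. Indeed the rate is `x ^ 2 / t` with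
`x = √(log (1 + 1/u))`; the tangent bound `x ^ 2 / t ≥ 2 a x - a ^ 2 t` with
`a = √(log (1 + γ₀)) / t₀` reduces the claim to the tangent line of `u ↦ √(log (1 + 1/u))` at `1/γ₀`, and that function is
convex because `2 (2u + 1) log (1 + 1/u) ≥ 1`.
-/

open Real Set

lemma two_mul_mul_sub_sq_mul_le_sq_div {t : ℝ} (ht : 0 < t) (a x : ℝ) :
    2 * a * x - a ^ 2 * t ≤ x ^ 2 / t := by
  rw [le_div_iff₀ ht]
  nlinarith [sq_nonneg (x - a * t)]

lemma ConvexOn.add_mul_sub_le_of_hasDerivAt {S : Set ℝ} {f : ℝ → ℝ} {f' x y : ℝ}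
    (hf : ConvexOn ℝ S f) (hx : x ∈ S) (hy : y ∈ S) (hf' : HasDerivAt f f' x) :
    f x + f' * (y - x) ≤ f y := by
  rcases lt_trichotomy x y with hxy | rfl | hxy
  · have h := hf.le_slope_of_hasDerivAt hx hy hxy hf'
    rw [slope_def_field, le_div_iff₀ (sub_pos.2 hxy)] at h
    linarith
  · simp
  · have h := hf.slope_le_of_hasDerivAt hy hx hxy hf'
    rw [slope_def_field, div_le_iff₀ (sub_pos.2 hxy)] at h
    linarith

lemma log_one_add_inv_pos {u : ℝ} (hu : 0 < u) : 0 < log (1 + u⁻¹) :=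
  log_pos (by simpa using hu)

lemma hasDerivAt_sqrt_log_one_add_inv {u : ℝ} (hu : 0 < u) :
    HasDerivAt (fun v => √(log (1 + v⁻¹)))
      (-(2 * (u * (u + 1) * √(log (1 + u⁻¹))))⁻¹) u := by
  have hL := log_one_add_inv_pos hu
  have h := (((hasDerivAt_inv hu.ne').const_add 1).log (by positivity)).sqrt hL.ne'
  convert h using 1
  have : 0 < √(log (1 + u⁻¹)) := sqrt_pos.2 hL
  field_simp

lemma log_one_add_inv_ge {u : ℝ} (hu : 0 < u) : (u + 1)⁻¹ ≤ log (1 + u⁻¹) := by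
  have h := one_sub_inv_le_log_of_pos (x := 1 + u⁻¹) (by positivity)
  have : 1 - (1 + u⁻¹)⁻¹ = (u + 1)⁻¹ := by field_simp; ring
  linarith

lemma convexOn_sqrt_log_one_add_inv : ConvexOn ℝ (Ioi 0) (fun u => √(log (1 + u⁻¹))) := by
  set φ : ℝ → ℝ := fun u => √(log (1 + u⁻¹))
  set g : ℝ → ℝ := fun u => u * (u + 1) * φ u
  have hφ' : ∀ u ∈ Ioi (0 : ℝ), HasDerivAt φ (-(2 * g u)⁻¹) u :=
    fun u hu => hasDerivAt_sqrt_log_one_add_inv hu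
  have hφpos : ∀ u ∈ Ioi (0 : ℝ), 0 < φ u := fun u hu => sqrt_pos.2 (log_one_add_inv_pos hu)
  have hg' : ∀ u ∈ Ioi (0 : ℝ), HasDerivAt g ((2 * u + 1) * φ u - (2 * φ u)⁻¹) u := by
    intro u hu
    have hu' : 0 < u := hu
    have := hφpos u hu
    refine (((hasDerivAt_id' u).mul ((hasDerivAt_id' u).add_const 1)).mul
      (hφ' u hu)).congr_deriv ?_
    simp only [g, Pi.mul_apply]
    field_simp
    ring
  refine convexOn_of_hasDerivWithinAt2_nonneg (convex_Ioi 0)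
    (f' := fun u => -(2 * g u)⁻¹)
    (f'' := fun u => ((2 * u + 1) * φ u - (2 * φ u)⁻¹) / (2 * g u ^ 2)) ?_ ?_ ?_ ?_
  · exact fun u hu => (hφ' u hu).continuousAt.continuousWithinAt
  · rw [interior_Ioi]
    exact fun u hu => (hφ' u hu).hasDerivWithinAt
  · rw [interior_Ioi]
    intro u hu
    have hu' : (0 : ℝ) < u := hu
    have hg : g u ≠ 0 := by have := hφpos u hu; positivity
    refine ((((hg' u hu).const_mul 2).inv (mul_ne_zero two_ne_zero hg)).neg.congr_deriv
      ?_).hasDerivWithinAt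
    field_simp
  · -- `φ'' = g' / (2 g²)`, and `g' ≥ 0` is `2 (2u + 1) φ² ≥ 1`
    rw [interior_Ioi]
    intro u hu
    have hu' : (0 : ℝ) < u := hu
    have hφu := hφpos u hu
    have hsq : φ u ^ 2 = log (1 + u⁻¹) := sq_sqrt (log_one_add_inv_pos hu).le
    have hlog := log_one_add_inv_ge hu'
    have key : (2 * φ u)⁻¹ ≤ (2 * u + 1) * φ u := by
      rw [inv_le_iff_one_le_mul₀ (by positivity)]
      have : (u + 1)⁻¹ * (u + 1) = 1 := inv_mul_cancel₀ (by positivity)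
      nlinarith
    exact div_nonneg (sub_nonneg.2 key) (by positivity)

lemma sqrt_log_one_add_tangent_le {γ γ₀ : ℝ} (hγ : 0 < γ) (hγ₀ : 0 < γ₀) :
    √(log (1 + γ₀)) - γ₀ ^ 2 / (2 * (γ₀ + 1) * √(log (1 + γ₀))) * (γ⁻¹ - γ₀⁻¹)
      ≤ √(log (1 + γ)) := by
  have h := convexOn_sqrt_log_one_add_inv.add_mul_sub_le_of_hasDerivAt
    (inv_pos.2 hγ₀) (inv_pos.2 hγ) (hasDerivAt_sqrt_log_one_add_inv (inv_pos.2 hγ₀))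
  simp only [inv_inv] at h
  convert h using 3
  field_simp
  ring

theorem stmt_0 (γ γ₀ t t₀ : ℝ) (hγ : 0 < γ) (hγ₀ : 0 < γ₀) (ht : 0 < t) (ht₀ : 0 < t₀) :
    Real.log (1 + γ) / t ≥
      (2 * Real.log (1 + γ₀) / t₀ + γ₀ / (t₀ * (γ₀ + 1)))
        - (γ₀ ^ 2 / (t₀ * (γ₀ + 1))) * (1 / γ)
        - (Real.log (1 + γ₀) / t₀ ^ 2) * t := by
  have hL₀ : 0 < √(log (1 + γ₀)) := sqrt_pos.2 (log_pos (by linarith))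
  have hL : √(log (1 + γ)) ^ 2 = log (1 + γ) := sq_sqrt (log_nonneg (by linarith))
  have hL₀sq : √(log (1 + γ₀)) ^ 2 = log (1 + γ₀) := sq_sqrt (log_nonneg (by linarith))
  set a := √(log (1 + γ₀)) / t₀ with ha
  calc (2 * log (1 + γ₀) / t₀ + γ₀ / (t₀ * (γ₀ + 1)))
        - (γ₀ ^ 2 / (t₀ * (γ₀ + 1))) * (1 / γ) - (log (1 + γ₀) / t₀ ^ 2) * t
      = 2 * a * (√(log (1 + γ₀))
          - γ₀ ^ 2 / (2 * (γ₀ + 1) * √(log (1 + γ₀))) * (γ⁻¹ - γ₀⁻¹)) - a ^ 2 * t := by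
        rw [ha]
        field_simp
        rw [hL₀sq]
        ring
    _ ≤ 2 * a * √(log (1 + γ)) - a ^ 2 * t := by
        gcongr
        exact sqrt_log_one_add_tangent_le hγ hγ₀
    _ ≤ log (1 + γ) / t := (two_mul_mul_sub_sq_mul_le_sq_div ht a _).trans_eq (by rw [hL])
end

section
/- For all real numbers β > 0, β⁰ > 0, α > 0, α⁰ > 0 with 2α − α⁰ > 0, the inequality β/α ≤ (1/2)·( β²/(β⁰·α⁰) + β⁰/(2α − α⁰) ) holds. -/
/-!
Write `β / α = √(β² · α⁻²)`. AM-GM with weight `β₀ α₀` gives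
`β / α ≤ (β² / (β₀ α₀) + β₀ α₀ / α²) / 2`, and the tangent-line bound
`α² ≥ α₀ (2α - α₀)` then replaces `α₀ / α²` by the convex function `1 / (2α - α₀)`.
-/

theorem two_mul_div_le_sq_div_add_div_sq (a b t : ℝ) (ht : 0 < t) :
    2 * (a / b) ≤ a ^ 2 / t + t / b ^ 2 := by
  have key : a ^ 2 / t + t / b ^ 2 - 2 * (a / b) = (a - t / b) ^ 2 / t := by
    field_simp
    ring
  have : 0 ≤ (a - t / b) ^ 2 / t := by positivity
  linarith

theorem mul_two_mul_sub_le_sq (x x₀ : ℝ) : x₀ * (2 * x - x₀) ≤ x ^ 2 := by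
  nlinarith [sq_nonneg (x - x₀)]

theorem div_sq_le_inv_two_mul_sub (x x₀ : ℝ) (h : 0 < 2 * x - x₀) :
    x₀ / x ^ 2 ≤ 1 / (2 * x - x₀) := by
  rcases eq_or_ne x 0 with rfl | hx
  · simp only [ne_eq, OfNat.ofNat_ne_zero, not_false_eq_true, zero_pow, div_zero]
    positivity
  · rw [div_le_div_iff₀ (by positivity) h, one_mul]
    exact mul_two_mul_sub_le_sq x x₀

theorem stmt_4_general (β β₀ α α₀ : ℝ) (hβ₀ : 0 < β₀) (hα₀ : 0 < α₀)
    (htrust : 0 < 2 * α - α₀) :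
    β / α ≤ (1 / 2) * (β ^ 2 / (β₀ * α₀) + β₀ / (2 * α - α₀)) := by
  have amgm := two_mul_div_le_sq_div_add_div_sq β α (β₀ * α₀) (by positivity)
  have tangent : β₀ * α₀ / α ^ 2 ≤ β₀ / (2 * α - α₀) := by
    rw [mul_div_assoc, ← mul_one_div β₀ (2 * α - α₀)]
    exact mul_le_mul_of_nonneg_left (div_sq_le_inv_two_mul_sub α α₀ htrust) hβ₀.le
  linarith

theorem stmt_4 (β β₀ α α₀ : ℝ) (hβ : 0 < β) (hβ₀ : 0 < β₀) (hα : 0 < α) (hα₀ : 0 < α₀)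
    (htrust : 0 < 2 * α - α₀) :
    β / α ≤ (1 / 2) * (β ^ 2 / (β₀ * α₀) + β₀ / (2 * α - α₀)) :=
  stmt_4_general β β₀ α α₀ hβ₀ hα₀ htrust
end

section
/- Let a, a⁰, φ, φ⁰, α, α⁰ be real numbers with φ > 0, φ⁰ > 0, α > 0, α⁰ > 0, a⁰ > 0, and 2a − a⁰ > 0. Set γ⁰ = (a⁰)²/φ⁰. Then ln(1 + a²/φ)/α ≥ 2·ln(1+γ⁰)/α⁰ + γ⁰/(α⁰·(γ⁰+1)) − ((γ⁰)²/(α⁰·(γ⁰+1)))·( φ/(a⁰·(2a − a⁰)) ) − (ln(1+γ⁰)/(α⁰)²)·α. -/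
/-!
With `z = 1 / γ`, the rate `log (1 + 1 / z) / t = ∫ s in 0..1, (t * (z + s))⁻¹` is an average of
the jointly convex functions `(t, y) ↦ (t * y)⁻¹`, so it is jointly convex in `(z, t)` and lies above
its tangent plane at `(z₀, t₀) = (φ₀ / a₀², α₀)`. Taking `z = φ / (a₀ (2a - a₀))`, the bound
`a₀ (2a - a₀) ≤ a²` (i.e. `(a - a₀)² ≥ 0`) gives `1 / z ≤ a² / φ`, and the rate is increasing in `1 / z`.
-/
open Real intervalIntegral

-- AM-GM for the three numbers `1`, `p²q`, `pq²`, whose product is `(pq)³`.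
lemma three_mul_mul_le_one_add {p q : ℝ} (hp : 0 ≤ p) (hq : 0 ≤ q) :
    3 * p * q ≤ 1 + p ^ 2 * q + p * q ^ 2 := by
  nlinarith [mul_nonneg hp (sq_nonneg (q - 1)), mul_nonneg hq (sq_nonneg (p - 1)),
    sq_nonneg (p * q - 1), mul_nonneg hp hq]

lemma integral_inv_add {c : ℝ} (hc : 0 < c) : ∫ s in (0:ℝ)..1, (c + s)⁻¹ = log (1 + 1 / c) := by
  rw [integral_comp_add_left (fun x => x⁻¹), add_zero, integral_inv_of_pos hc (by linarith)]
  congr 1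
  field_simp

lemma integral_inv_add_sq {c : ℝ} (hc : 0 < c) :
    ∫ s in (0:ℝ)..1, ((c + s) ^ 2)⁻¹ = (c * (c + 1))⁻¹ := by
  have h0 : (0:ℝ) ∉ Set.uIcc c (c + 1) := Set.notMem_uIcc_of_lt hc (by linarith)
  simp_rw [← zpow_natCast, ← zpow_neg]
  rw [integral_comp_add_left (fun x : ℝ => x ^ (-((2:ℕ):ℤ))), add_zero,
    integral_zpow (Or.inr ⟨by norm_num, h0⟩)]
  norm_num [zpow_neg_one]
  field_simp
  ring

lemma intervalIntegrable_inv_add_pow {c : ℝ} (hc : 0 < c) (n : ℕ) :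
    IntervalIntegrable (fun s => ((c + s) ^ n)⁻¹) MeasureTheory.volume 0 1 := by
  refine intervalIntegrable_inv (fun s hs => ?_) (by fun_prop)
  have : 0 ≤ s := by rw [Set.uIcc_of_le zero_le_one] at hs; exact hs.1
  positivity

lemma tangent_plane_le_inv_mul {t t₀ y y₀ : ℝ} (ht : 0 < t) (ht₀ : 0 < t₀) (hy : 0 < y)
    (hy₀ : 0 < y₀) :
    3 / (t₀ * y₀) - t / (t₀ ^ 2 * y₀) - y / (t₀ * y₀ ^ 2) ≤ (t * y)⁻¹ := by
  have hamgm := three_mul_mul_le_one_add (div_pos ht ht₀).le (div_pos hy hy₀).le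
  rw [← sub_nonneg]
  calc 0 ≤ (t * y)⁻¹ * (1 + (t / t₀) ^ 2 * (y / y₀) + t / t₀ * (y / y₀) ^ 2
        - 3 * (t / t₀) * (y / y₀)) := mul_nonneg (by positivity) (by linarith)
    _ = _ := by
      field_simp
      ring

lemma log_one_add_inv_div_tangent_le {z z₀ t t₀ : ℝ} (hz : 0 < z) (hz₀ : 0 < z₀) (ht : 0 < t)
    (ht₀ : 0 < t₀) :
    log (1 + 1 / z₀) / t₀ + (z₀ - z) / (z₀ * (z₀ + 1) * t₀) - log (1 + 1 / z₀) * (t - t₀) / t₀ ^ 2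
      ≤ log (1 + 1 / z) / t := by
  have hpoint : ∀ s ∈ Set.Icc (0:ℝ) 1, (2 / t₀ - t / t₀ ^ 2) * (z₀ + s)⁻¹
      - (z - z₀) / t₀ * ((z₀ + s) ^ 2)⁻¹ ≤ t⁻¹ * (z + s)⁻¹ := by
    rintro s ⟨hs, -⟩
    have hy₀ : z₀ + s ≠ 0 := by positivity
    calc (2 / t₀ - t / t₀ ^ 2) * (z₀ + s)⁻¹ - (z - z₀) / t₀ * ((z₀ + s) ^ 2)⁻¹
        = 3 / (t₀ * (z₀ + s)) - t / (t₀ ^ 2 * (z₀ + s)) - (z + s) / (t₀ * (z₀ + s) ^ 2) := by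
          field_simp; ring
      _ ≤ (t * (z + s))⁻¹ := tangent_plane_le_inv_mul ht ht₀ (by linarith) (by linarith)
      _ = t⁻¹ * (z + s)⁻¹ := mul_inv t (z + s)
  have hI₀ : IntervalIntegrable (fun s => (z₀ + s)⁻¹) MeasureTheory.volume 0 1 := by
    simpa using intervalIntegrable_inv_add_pow hz₀ 1
  have hI₀' := intervalIntegrable_inv_add_pow hz₀ 2
  have hI : IntervalIntegrable (fun s => (z + s)⁻¹) MeasureTheory.volume 0 1 := by
    simpa using intervalIntegrable_inv_add_pow hz 1
  have hmono := integral_mono_on zero_le_one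
    ((hI₀.const_mul _).sub (hI₀'.const_mul _)) (hI.const_mul t⁻¹) hpoint
  rw [integral_sub (hI₀.const_mul _) (hI₀'.const_mul _), integral_const_mul, integral_const_mul,
    integral_const_mul, integral_inv_add hz, integral_inv_add hz₀, integral_inv_add_sq hz₀] at hmono
  convert hmono using 1
  · field_simp
    ring
  · ring

theorem stmt_6 (a a₀ φ φ₀ α α₀ : ℝ) (hφ : 0 < φ) (hφ₀ : 0 < φ₀) (hα : 0 < α) (hα₀ : 0 < α₀)
    (ha₀ : 0 < a₀) (htrust : 0 < 2 * a - a₀) :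
    Real.log (1 + a ^ 2 / φ) / α ≥
      2 * Real.log (1 + a₀ ^ 2 / φ₀) / α₀
        + (a₀ ^ 2 / φ₀) / (α₀ * (a₀ ^ 2 / φ₀ + 1))
        - ((a₀ ^ 2 / φ₀) ^ 2 / (α₀ * (a₀ ^ 2 / φ₀ + 1))) * (φ / (a₀ * (2 * a - a₀)))
        - (Real.log (1 + a₀ ^ 2 / φ₀) / α₀ ^ 2) * α := by
  have hz : 0 < φ / (a₀ * (2 * a - a₀)) := by positivity
  have hz₀ : 0 < φ₀ / a₀ ^ 2 := by positivity
  have hγ₀ : 1 / (φ₀ / a₀ ^ 2) = a₀ ^ 2 / φ₀ := one_div_div φ₀ (a₀ ^ 2)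
  have hγ : 1 / (φ / (a₀ * (2 * a - a₀))) ≤ a ^ 2 / φ := by
    rw [one_div_div]
    gcongr
    nlinarith [sq_nonneg (a - a₀)]
  have htangent := log_one_add_inv_div_tangent_le hz hz₀ hα hα₀
  rw [hγ₀] at htangent
  calc _ = log (1 + a₀ ^ 2 / φ₀) / α₀
          + (φ₀ / a₀ ^ 2 - φ / (a₀ * (2 * a - a₀))) / (φ₀ / a₀ ^ 2 * (φ₀ / a₀ ^ 2 + 1) * α₀)
          - log (1 + a₀ ^ 2 / φ₀) * (α - α₀) / α₀ ^ 2 := by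
        field_simp
        ring
    _ ≤ log (1 + 1 / (φ / (a₀ * (2 * a - a₀)))) / α := htangent
    _ ≤ log (1 + a ^ 2 / φ) / α := by gcongr
end
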